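/- Let n ≥ 1, let A_k := E_{1k} ∈ M_n(ℂ) for k = 1,…,n (the matrix units with 1 in position (1,k)). Then |A_k| = E_{kk}, the operator norm of Σ_{k=1}^n |A_k| equals 1, and the operator norm of Σ_{k=1}^n A_k equals √n. Hence the constant √n in the inequality ‖Σ A_k‖_∞ ≤ √n ‖Σ |A_k|‖_∞ is attained. -/

import Mathlib

open Matrix
open scoped ComplexOrder

/-- Square root of a positive semidefinite matrix (as in the older Mathlib). -/
noncomputable def Matrix.PosSemidef.sqrt {n 𝕜 : Type*} [Fintype n] [RCLike 𝕜] [DecidableEq n]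
    {A : Matrix n n 𝕜} (hA : A.PosSemidef) : Matrix n n 𝕜 :=
  hA.1.eigenvectorUnitary.1 * diagonal ((↑) ∘ (hA.1.eigenvalues · |>.sqrt)) *
    (star hA.1.eigenvectorUnitary : Matrix n n 𝕜)

lemma Matrix.PosSemidef.posSemidef_sqrt {n 𝕜 : Type*} [Fintype n] [RCLike 𝕜] [DecidableEq n]
    {A : Matrix n n 𝕜} (hA : A.PosSemidef) : PosSemidef hA.sqrt := by
  apply PosSemidef.mul_mul_conjTranspose_same
  refine posSemidef_diagonal_iff.mpr fun i ↦ ?_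
  rw [Function.comp_apply, RCLike.nonneg_iff]
  constructor
  · simp only [RCLike.ofReal_re]
    exact Real.sqrt_nonneg _
  · simp only [RCLike.ofReal_im]

/-- The usual modulus `|Z| = (Zᴴ Z)^(1/2)` (positive semidefinite square root). -/
noncomputable def mAbs {k : Type*} [Fintype k] [DecidableEq k]
    (Z : Matrix k k ℂ) : Matrix k k ℂ :=
  (Matrix.posSemidef_conjTranspose_mul_self Z).sqrt

lemma mAbs_posSemidef {k : Type*} [Fintype k] [DecidableEq k]
    (Z : Matrix k k ℂ) : (mAbs Z).PosSemidef :=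
  Matrix.PosSemidef.posSemidef_sqrt _

lemma psd_half_smul {k : Type*} [Fintype k] [DecidableEq k]
    {M : Matrix k k ℂ} (h : M.PosSemidef) :
    ((2:ℂ)⁻¹ • M).PosSemidef := by
  rw [posSemidef_iff_dotProduct_mulVec]
  constructor
  · unfold Matrix.IsHermitian
    rw [conjTranspose_smul, h.1]
    norm_num
  · intro x
    rw [smul_mulVec, dotProduct_smul]
    exact smul_nonneg (by simp [Complex.le_def]) ((posSemidef_iff_dotProduct_mulVec.mp h).2 x)

/-- The arithmetic symmetric modulus `(|Z| + |Z*|)/2`. -/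
noncomputable def symMod {k : Type*} [Fintype k] [DecidableEq k]
    (Z : Matrix k k ℂ) : Matrix k k ℂ :=
  (2:ℂ)⁻¹ • (mAbs Z + mAbs Zᴴ)

lemma symMod_posSemidef {k : Type*} [Fintype k] [DecidableEq k]
    (Z : Matrix k k ℂ) : (symMod Z).PosSemidef :=
  psd_half_smul ((mAbs_posSemidef Z).add (mAbs_posSemidef Zᴴ))

lemma qsym_arg_psd {k : Type*} [Fintype k] [DecidableEq k]
    (Z : Matrix k k ℂ) :
    ((2:ℂ)⁻¹ • (mAbs Z ^ 2 + mAbs Zᴴ ^ 2)).PosSemidef :=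
  psd_half_smul (((mAbs_posSemidef Z).pow 2).add ((mAbs_posSemidef Zᴴ).pow 2))

/-- The quadratic symmetric modulus `((|Z|² + |Z*|²)/2)^(1/2)`. -/
noncomputable def qsymMod {k : Type*} [Fintype k] [DecidableEq k]
    (Z : Matrix k k ℂ) : Matrix k k ℂ :=
  (qsym_arg_psd Z).sqrt

lemma qsymMod_posSemidef {k : Type*} [Fintype k] [DecidableEq k]
    (Z : Matrix k k ℂ) : (qsymMod Z).PosSemidef :=
  Matrix.PosSemidef.posSemidef_sqrt _

/-- The Schatten `p`-norm, as the `ℓ^p` norm of the singular values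
(the eigenvalues of `|X|`). -/
noncomputable def schatten {k : Type*} [Fintype k] [DecidableEq k]
    (p : ℝ) (X : Matrix k k ℂ) : ℝ :=
  (∑ i, ((mAbs_posSemidef X).1.eigenvalues i) ^ p) ^ (1/p)

/-- The operator norm: the largest singular value. -/
noncomputable def opN {k : Type*} [Fintype k] [DecidableEq k]
    (X : Matrix k k ℂ) : ℝ :=
  ⨆ i, (mAbs_posSemidef X).1.eigenvalues i

/-- The Frobenius (Schatten-2) norm. -/
noncomputable def frob {k : Type*} [Fintype k] [DecidableEq k]
    (X : Matrix k k ℂ) : ℝ :=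
  Real.sqrt ((Xᴴ * X).trace.re)

/-!
`|E_{1k}|² = E_{k1} E_{1k} = E_{kk}`, so `|E_{1k}| = E_{kk}` and `Σ_k |E_{1k}| = 1`. The row matrix
`S = Σ_k E_{1k}` has `S* S = J`, the all-ones matrix, and `J² = n J`; hence `|S| = J / √n` and
`|S|² = √n |S|`. The eigenvalues of a Hermitian `B` with `B² = c B` lie in `{0, c}`, and `c` occurs
once `B ≠ 0`; this gives `‖1‖_∞ = 1` and `‖S‖_∞ = √n`.
-/

open scoped MatrixOrder in
lemma Matrix.PosSemidef.sqrt_eq_cfcSqrt {m 𝕜 : Type*} [Fintype m] [DecidableEq m]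
    [RCLike 𝕜] {A : Matrix m m 𝕜} (hA : A.PosSemidef) : hA.sqrt = CFC.sqrt A := by
  rw [CFC.sqrt_eq_real_sqrt A hA.nonneg, cfcₙ_eq_cfc, hA.1.cfc_eq, IsHermitian.cfc,
    Unitary.conjStarAlgAut_apply]
  rfl

open scoped MatrixOrder in
lemma Matrix.PosSemidef.sqrt_eq_of_mul_self_eq {m 𝕜 : Type*} [Fintype m] [DecidableEq m]
    [RCLike 𝕜] {A B : Matrix m m 𝕜} (hA : A.PosSemidef) (hB : B.PosSemidef) (h : B * B = A) :
    hA.sqrt = B := by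
  rw [hA.sqrt_eq_cfcSqrt, CFC.sqrt_eq_iff A B hA.nonneg hB.nonneg, h]

lemma Matrix.IsHermitian.eigenvalues_eq_zero_or_eq_of_mul_self_eq_smul {m 𝕜 : Type*} [Fintype m]
    [DecidableEq m] [RCLike 𝕜] {A : Matrix m m 𝕜} (hA : A.IsHermitian) {c : ℝ} (h : A * A = c • A)
    (i : m) :
    hA.eigenvalues i = 0 ∨ hA.eigenvalues i = c := by
  set μ := hA.eigenvalues i
  set v := ⇑(hA.eigenvectorBasis i)
  have hv : A *ᵥ v = μ • v := hA.mulVec_eigenvectorBasis i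
  have hv_ne : v ≠ 0 := fun hv0 ↦
    hA.eigenvectorBasis.orthonormal.ne_zero i (by ext j; exact congrFun hv0 j)
  have hμ : (μ * (μ - c)) • v = 0 := by
    have := congrArg (· *ᵥ v) h
    simp only [← mulVec_mulVec, hv, mulVec_smul, smul_mulVec, smul_smul] at this
    rw [mul_sub, sub_smul, this, mul_comm, sub_self]
  exact (mul_eq_zero.mp ((smul_eq_zero.mp hμ).resolve_right hv_ne)).imp id sub_eq_zero.mp

section Modulus

variable {m : Type*} [Fintype m] [DecidableEq m]

lemma mAbs_eq_of_mul_self_eq {Z B : Matrix m m ℂ} (hB : B.PosSemidef) (h : B * B = Zᴴ * Z) :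
    mAbs Z = B :=
  PosSemidef.sqrt_eq_of_mul_self_eq _ hB h

lemma opN_eq_of_mAbs_mul_self_eq_smul {X : Matrix m m ℂ} {c : ℝ}
    (h : mAbs X * mAbs X = c • mAbs X) (h0 : mAbs X ≠ 0) : opN X = c := by
  have hB := mAbs_posSemidef X
  have hspec := hB.1.eigenvalues_eq_zero_or_eq_of_mul_self_eq_smul h
  obtain ⟨i₀, hi₀⟩ : ∃ i, hB.1.eigenvalues i ≠ 0 := by
    by_contra! hzero
    exact h0 (hB.1.eigenvalues_eq_zero_iff.mp (funext hzero))
  have hc : hB.1.eigenvalues i₀ = c := (hspec i₀).resolve_left hi₀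
  have : Nonempty m := ⟨i₀⟩
  refine le_antisymm (ciSup_le fun i ↦ ?_) (hc ▸ le_ciSup (Set.finite_range _).bddAbove i₀)
  rcases hspec i with hi | hi
  · rw [hi, ← hc]; exact hB.eigenvalues_nonneg i₀
  · exact hi.le

lemma mAbs_single_one (i j : m) : mAbs (single i j (1 : ℂ)) = single j j 1 := by
  refine mAbs_eq_of_mul_self_eq ?_ ?_
  · rw [← diagonal_single]
    exact PosSemidef.diagonal fun k ↦ by by_cases hk : k = j <;> simp [hk]
  · simp [single_mul_single_same]

lemma mAbs_one : mAbs (1 : Matrix m m ℂ) = 1 :=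
  mAbs_eq_of_mul_self_eq PosSemidef.one (by simp)

lemma opN_one [Nonempty m] : opN (1 : Matrix m m ℂ) = 1 :=
  opN_eq_of_mAbs_mul_self_eq_smul (by simp [mAbs_one]) (by simp [mAbs_one])

end Modulus

section RowMatrix

variable {m : Type*} [Fintype m] [DecidableEq m]

lemma sum_single_row_apply (i a b : m) :
    (∑ k, single i k (1 : ℂ)) a b = if i = a then 1 else 0 := by
  by_cases h : i = a <;> simp [Matrix.sum_apply, single_apply, h]

lemma conjTranspose_mul_sum_single_row (i : m) :
    (∑ k, single i k (1 : ℂ))ᴴ * ∑ k, single i k 1 = of fun _ _ ↦ 1 := by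
  ext a b
  simp [mul_apply, sum_single_row_apply]

omit [DecidableEq m] in
lemma of_one_mul_self :
    (of fun _ _ ↦ (1 : ℂ) : Matrix m m ℂ) * of (fun _ _ ↦ 1) =
      (Fintype.card m : ℝ) • of fun _ _ ↦ 1 := by
  ext a b
  simp [mul_apply]

lemma mAbs_sum_single_row (i : m) :
    mAbs (∑ k, single i k (1 : ℂ)) = (√(Fintype.card m))⁻¹ • of fun _ _ ↦ (1 : ℂ) := by
  have hcard : (0 : ℝ) < Fintype.card m := by exact_mod_cast Fintype.card_pos_iff.mpr ⟨i⟩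
  refine mAbs_eq_of_mul_self_eq ?_ ?_
  · rw [← conjTranspose_mul_sum_single_row i]
    exact (posSemidef_conjTranspose_mul_self _).smul (by positivity)
  · rw [conjTranspose_mul_sum_single_row, smul_mul_smul_comm, of_one_mul_self, smul_smul, ← mul_inv,
      Real.mul_self_sqrt hcard.le, inv_mul_cancel₀ hcard.ne', one_smul]

lemma opN_sum_single_row (i : m) : opN (∑ k, single i k (1 : ℂ)) = √(Fintype.card m) := by
  have hcard : (0 : ℝ) < Fintype.card m := by exact_mod_cast Fintype.card_pos_iff.mpr ⟨i⟩
  have hsqrt : √(Fintype.card m) ≠ 0 := (Real.sqrt_pos.mpr hcard).ne'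
  refine opN_eq_of_mAbs_mul_self_eq_smul ?_ ?_ <;> rw [mAbs_sum_single_row]
  · rw [smul_mul_smul_comm, of_one_mul_self, smul_smul, smul_smul]
    congr 1
    field_simp
    simp [hcard.le]
  · refine smul_ne_zero (inv_ne_zero hsqrt) fun hJ ↦ ?_
    simpa using congrFun₂ hJ i i

end RowMatrix

/-- For `A_k = E_{1k}`: `|A_k| = E_{kk}`, `‖Σ |A_k|‖_∞ = 1`,
`‖Σ A_k‖_∞ = √n`, so equality holds in `‖Σ A_k‖_∞ ≤ √n ‖Σ |A_k|‖_∞`. -/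
theorem stmt19 (n : ℕ) (hn : 1 ≤ n) :
    (∀ k : Fin n,
      mAbs (Matrix.single (⟨0, hn⟩ : Fin n) k (1:ℂ)) =
        Matrix.single k k (1:ℂ)) ∧
    opN (∑ k : Fin n, mAbs (Matrix.single (⟨0, hn⟩ : Fin n) k (1:ℂ))) = 1 ∧
    opN (∑ k : Fin n, Matrix.single (⟨0, hn⟩ : Fin n) k (1:ℂ)) = Real.sqrt n ∧
    opN (∑ k : Fin n, Matrix.single (⟨0, hn⟩ : Fin n) k (1:ℂ)) =
      Real.sqrt n *
        opN (∑ k : Fin n, mAbs (Matrix.single (⟨0, hn⟩ : Fin n) k (1:ℂ))) := by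
  have : Nonempty (Fin n) := ⟨⟨0, hn⟩⟩
  have habs_sum : opN (∑ k : Fin n, mAbs (single (⟨0, hn⟩ : Fin n) k (1 : ℂ))) = 1 := by
    simp only [mAbs_single_one, sum_single_one, opN_one]
  have hrow : opN (∑ k : Fin n, single (⟨0, hn⟩ : Fin n) k (1 : ℂ)) = √n := by
    simpa using opN_sum_single_row (⟨0, hn⟩ : Fin n)
  exact ⟨mAbs_single_one _, habs_sum, hrow, by rw [habs_sum, hrow, mul_one]⟩
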